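/- arXiv:2210.12465 — 4 statements merged into one kernel-verified Lean document; each statement's English description precedes it below -/
import Mathlib

section
/- Let Π be an even-near-critical centrally symmetric allowable sequence of 2n points in noncentral general position whose first move contains a crossing switch reversing the crossing substring s₁ of length 2d₁. Then for each 1 ≤ k ≤ d₁, the position of s₁(k) in permutation π_{n} (the permutation after n moves) equals 2n - k + 1; in particular the extreme point s₁(1) reaches position 2n, and its conjugate reaches position 1. -/
/-- `σ` is obtained from `ρ` by reversing disjoint substrings of consecutive positions:
every position lies in an interval `[a,b]` of positions that gets reversed
(a trivial interval `a = b` accounts for untouched positions).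
Permutations send points to positions (`0`-indexed). -/
def IsIntervalReversalStep (N : ℕ) (ρ σ : Fin N ≃ Fin N) : Prop :=
  ∀ j : Fin N, ∃ a b : ℕ, a ≤ (j : ℕ) ∧ (j : ℕ) ≤ b ∧ b < N ∧
    ∀ p : Fin N, a ≤ ((ρ p : ℕ)) → ((ρ p : ℕ)) ≤ b → ((σ p : ℕ)) = a + b - ((ρ p : ℕ))

/-- An allowable sequence on `N` points: a doubly-infinite sequence of permutations
(point `p` occupies position `perm i p` in the `i`-th permutation), where
`perm (i + h)` is the reversal of `perm i`, consecutive permutations differ by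
simultaneous reversals of disjoint consecutive substrings, and every pair of points
switches (i.e. reverses its relative order) exactly once per halfperiod. -/
structure AllowableSeq (N : ℕ) where
  perm : ℤ → (Fin N ≃ Fin N)
  h : ℕ
  h_pos : 0 < h
  reversal : ∀ (i : ℤ) (p : Fin N), ((perm (i + h)) p : ℕ) = N - 1 - ((perm i) p : ℕ)
  step : ∀ i : ℤ, IsIntervalReversalStep N (perm (i - 1)) (perm i)
  flip_once : ∀ p q : Fin N, p ≠ q →
    ∃! i : ℤ, i ∈ Finset.Icc 1 (h : ℤ) ∧
      ¬ (((perm (i - 1)) p < (perm (i - 1)) q) ↔ ((perm i) p < (perm i) q))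

/-- The pair of points `p, q` switches (participates in a common switch) in the
`i`-th move, i.e. their relative order is reversed from `perm (i-1)` to `perm i`. -/
def Flips {N : ℕ} (A : AllowableSeq N) (i : ℤ) (p q : Fin N) : Prop :=
  ¬ (((A.perm (i - 1)) p < (A.perm (i - 1)) q) ↔ ((A.perm i) p < (A.perm i) q))

/-- `A` is centrally symmetric with conjugation `conj`: the positions of a point and
its conjugate always sum to `N - 1` (i.e. `2n + 1` with `1`-indexed positions). -/
def CentSym {N : ℕ} (A : AllowableSeq N) (conj : Fin N → Fin N) : Prop :=
  ∀ (i : ℤ) (p : Fin N), ((A.perm i) p : ℕ) + ((A.perm i) (conj p) : ℕ) = N - 1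

/-- The `i`-th move of `A` (an allowable sequence on `2n` points) contains a crossing
switch reversing a centered substring of `2d` points, occupying positions
`n - d, …, n + d - 1`; maximality of the reversed centered substring is required. -/
def CrossingAt (n : ℕ) (A : AllowableSeq (2 * n)) (i : ℤ) (d : ℕ) : Prop :=
  1 ≤ d ∧ d ≤ n ∧
  (∀ p : Fin (2 * n), n - d ≤ ((A.perm (i - 1)) p : ℕ) → ((A.perm (i - 1)) p : ℕ) < n + d →
      ((A.perm i) p : ℕ) = 2 * n - 1 - ((A.perm (i - 1)) p : ℕ)) ∧
  (d = n ∨ ∀ p : Fin (2 * n), ((A.perm (i - 1)) p : ℕ) = n - d - 1 →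
      ((A.perm i) p : ℕ) ≠ n + d)

/-- `A` has central signature `(d 0, …, d (t-1))`, witnessed by the strictly increasing
sequence `m 0 < ⋯ < m (t-1)` of moves of the halfperiod `1, …, 2n` containing the
crossing switches, the `i`-th reversing `2 * d i` points; no other move contains a
crossing switch. -/
def HasCentralSignature (n t : ℕ) (A : AllowableSeq (2 * n)) (d : Fin t → ℕ)
    (m : Fin t → ℤ) : Prop :=
  StrictMono m ∧ (∀ i, m i ∈ Finset.Icc (1 : ℤ) (2 * n)) ∧
  (∀ i, CrossingAt n A (m i) (d i)) ∧
  (∀ j : ℤ, j ∈ Finset.Icc (1 : ℤ) (2 * n) → (∀ i, j ≠ m i) → ∀ e, ¬ CrossingAt n A j e)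

/-- `A` is in noncentral general position: every switch other than a crossing switch is
a transposition, i.e. every point that moves in a move either moves by exactly one
position or takes part in the crossing switch of that move. -/
def NoncentralGenPos (n : ℕ) (A : AllowableSeq (2 * n)) : Prop :=
  ∀ (i : ℤ) (p : Fin (2 * n)), ((A.perm i) p : ℕ) ≠ ((A.perm (i - 1)) p : ℕ) →
    (((A.perm i) p : ℕ) + 1 = ((A.perm (i - 1)) p : ℕ) ∨
      ((A.perm (i - 1)) p : ℕ) + 1 = ((A.perm i) p : ℕ)) ∨
    ∃ e, CrossingAt n A i e ∧ n - e ≤ ((A.perm (i - 1)) p : ℕ) ∧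
      ((A.perm (i - 1)) p : ℕ) < n + e

/-!
Outside crossing switches every switch is an adjacent transposition, and an adjacent
transposition of a conjugate pair would be a crossing switch of the two central points; so a
conjugate pair switches only inside a crossing switch, and each point takes part in exactly one.

If, moving by unit steps only, a set `X` of points overtakes a set `Y`, this takes at least
`#X + #Y - 1` moves, because the first switches of distinct points of `Y` with `X` happen at
distinct moves. Let `j` be a crossing switch other than the first one, which is at move `1`.
The `d₁` points raised by the first crossing switch overtake the upper half of `j` before move
`m j`, and the `d j` points raised by `j` overtake those of the first crossing switch by time
`2n`, when the latter are back where move `1` put them. Hence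
`1 + d₁ + d j ≤ m j ≤ 2n + 1 - d₁ - d j`.

Now take a point outside the lower half of `s₁`. If it crossed at move `1`, it is below the
centre at time `n`. Otherwise, by these bounds, its crossing move `m j` is at most
`n - d₁ - d j` unit steps away from time `n`, and at that crossing it lies in the lowest
`n + d j` positions. Either way it is below the top `d₁` positions at time `n`. So these
positions are held by the lower half of `s₁`, which move `1` reversed and whose points never
switch again before time `n`.
-/

open Finset

namespace AllowableSeq

variable {N : ℕ} (A : AllowableSeq N)

def pos (i : ℤ) (u : Fin N) : ℕ := A.perm i u

lemma pos_lt (i : ℤ) (u : Fin N) : A.pos i u < N := (A.perm i u).isLt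

lemma pos_injective (i : ℤ) : Function.Injective (A.pos i) :=
  Fin.val_injective.comp (A.perm i).injective

lemma exists_pos_eq (i : ℤ) {c : ℕ} (hc : c < N) : ∃ u, A.pos i u = c :=
  ⟨(A.perm i).symm ⟨c, hc⟩, congrArg Fin.val ((A.perm i).apply_symm_apply _)⟩

lemma card_filter_pos_mem_Ico (i : ℤ) {lo hi : ℕ} (hhi : hi ≤ N) :
    #{u | lo ≤ A.pos i u ∧ A.pos i u < hi} = hi - lo := by
  calc #{u | lo ≤ A.pos i u ∧ A.pos i u < hi}
      = #{x : Fin N | lo ≤ (x : ℕ) ∧ (x : ℕ) < hi} :=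
        card_equiv (A.perm i) fun u => by simp only [mem_filter, mem_univ, true_and]; rfl
    _ = #(Ico lo hi) := by
      rw [← card_map Fin.valEmbedding]
      congr 1
      ext x
      simp only [mem_map, mem_filter, mem_univ, true_and, Fin.valEmbedding_apply, mem_Ico]
      exact ⟨fun ⟨y, hy, hyx⟩ => hyx ▸ hy, fun hx => ⟨⟨x, by omega⟩, hx, rfl⟩⟩
    _ = hi - lo := Nat.card_Ico lo hi

lemma flips_iff {i : ℤ} {u v : Fin N} :
    Flips A i u v ↔ ¬ (A.pos (i - 1) u < A.pos (i - 1) v ↔ A.pos i u < A.pos i v) :=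
  Iff.rfl

def UnitMove (i : ℤ) (u : Fin N) : Prop :=
  A.pos i u ≤ A.pos (i - 1) u + 1 ∧ A.pos (i - 1) u ≤ A.pos i u + 1

end AllowableSeq

namespace Flips

variable {N : ℕ} {A : AllowableSeq N} {i : ℤ} {u v : Fin N}

lemma ne (h : Flips A i u v) : u ≠ v := by
  rintro rfl
  exact h (iff_of_false (lt_irrefl _) (lt_irrefl _))

lemma symm (h : Flips A i u v) : Flips A i v u := by
  have h1 := (A.pos_injective (i - 1)).ne h.ne
  have h2 := (A.pos_injective i).ne h.ne
  rw [A.flips_iff] at h ⊢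
  omega

lemma adjacent_swap (h : Flips A i u v) (hu : A.UnitMove i u) (hv : A.UnitMove i v)
    (hlt : A.pos (i - 1) u < A.pos (i - 1) v) :
    A.pos (i - 1) v = A.pos (i - 1) u + 1 ∧ A.pos i u = A.pos (i - 1) v ∧
      A.pos i v = A.pos (i - 1) u := by
  have h2 := (A.pos_injective i).ne h.ne
  rw [A.flips_iff] at h
  obtain ⟨hu1, hu2⟩ := hu
  obtain ⟨hv1, hv2⟩ := hv
  omega

lemma pos_sub_one_eq (h : Flips A i u v) (hu : A.UnitMove i u) (hv : A.UnitMove i v) :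
    A.pos (i - 1) u = A.pos i v := by
  rcases lt_or_gt_of_ne ((A.pos_injective (i - 1)).ne h.ne) with hlt | hlt
  · exact (h.adjacent_swap hu hv hlt).2.2.symm
  · have := h.symm.adjacent_swap hv hu hlt
    omega

end Flips

namespace AllowableSeq

section

variable {N : ℕ} (A : AllowableSeq N)

lemma pos_lt_pos_iff_of_forall_not_flips {u v : Fin N} {a b : ℤ} (hab : a ≤ b)
    (h : ∀ c ∈ Set.Ioc a b, ¬ Flips A c u v) :
    A.pos a u < A.pos a v ↔ A.pos b u < A.pos b v := by
  induction b, hab using Int.leInduction with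
  | base => rfl
  | succ b hab ih =>
    have hb := h (b + 1) ⟨by omega, le_rfl⟩
    rw [flips_iff, not_not, add_sub_cancel_right] at hb
    exact (ih fun c hc => h c ⟨hc.1, by linarith [hc.2]⟩).trans hb

lemma exists_flips_of_not_iff {u v : Fin N} {a b : ℤ} (hab : a ≤ b)
    (h : ¬ (A.pos a u < A.pos a v ↔ A.pos b u < A.pos b v)) :
    ∃ c ∈ Set.Ioc a b, Flips A c u v := by
  by_contra! hc
  exact h (A.pos_lt_pos_iff_of_forall_not_flips hab hc)

lemma abs_pos_sub_pos_le {u : Fin N} {a b : ℤ} (hab : a ≤ b)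
    (h : ∀ c ∈ Set.Ioc a b, A.UnitMove c u) :
    |(A.pos b u : ℤ) - A.pos a u| ≤ b - a := by
  induction b, hab using Int.leInduction with
  | base => simp
  | succ b hab ih =>
    have hu := h (b + 1) ⟨by omega, le_rfl⟩
    rw [UnitMove, add_sub_cancel_right] at hu
    have := abs_le.mp (ih fun c hc => h c ⟨hc.1, by linarith [hc.2]⟩)
    rw [abs_le]
    omega

open Classical in
noncomputable def flipMoves (X : Finset (Fin N)) (y : Fin N) (s s' : ℤ) : Finset ℤ :=
  {c ∈ Icc (s + 1) s' | ∃ x ∈ X, Flips A c x y}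

lemma mem_flipMoves {X : Finset (Fin N)} {y : Fin N} {s s' c : ℤ} :
    c ∈ A.flipMoves X y s s' ↔ c ∈ Set.Ioc s s' ∧ ∃ x ∈ X, Flips A c x y := by
  simp only [flipMoves, mem_filter, mem_Icc, Set.mem_Ioc, Int.add_one_le_iff]

section Overtake

variable {A} {X : Finset (Fin N)} {y : Fin N} {s s' : ℤ} (hss : s ≤ s')
  (hX : ∀ c ∈ Set.Ioc s s', ∀ x ∈ X, A.UnitMove c x)
  (hy : ∀ c ∈ Set.Ioc s s', A.UnitMove c y)
  (hs : ∀ x ∈ X, A.pos s x < A.pos s y) (hs' : ∀ x ∈ X, A.pos s' y < A.pos s' x)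
include hss hX hy hs hs'

/-- At a unit move `y` switches with at most one point. -/
lemma card_le_card_flipMoves : #X ≤ #(A.flipMoves X y s s') := by
  have hflip : ∀ x ∈ X, ∃ c ∈ Set.Ioc s s', Flips A c x y := fun x hx =>
    A.exists_flips_of_not_iff hss (by have := hs x hx; have := hs' x hx; omega)
  choose! f hf using hflip
  refine card_le_card_of_injOn f
    (fun x hx => A.mem_flipMoves.mpr ⟨(hf x hx).1, x, hx, (hf x hx).2⟩)
    fun x hx x' hx' hxx' => A.pos_injective (f x - 1) ?_
  have h' := (hf x' hx').2
  rw [← hxx'] at h'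
  have hu := hy (f x) (hf x hx).1
  rw [(hf x hx).2.pos_sub_one_eq (hX _ (hf x hx).1 x hx) hu,
    h'.pos_sub_one_eq (hX _ (hf x hx).1 x' hx') hu]

lemma exists_first_flips (hX0 : X.Nonempty) :
    ∃ c ∈ Set.Ioc s s', c + #X ≤ s' + 1 ∧ (∃ x ∈ X, Flips A c x y) ∧
      ∀ x ∈ X, A.pos (c - 1) x < A.pos (c - 1) y := by
  have hcard := card_le_card_flipMoves hss hX hy hs hs'
  have hne : (A.flipMoves X y s s').Nonempty := card_pos.mp (hX0.card_pos.trans_le hcard)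
  obtain ⟨hc, hflip⟩ := A.mem_flipMoves.mp (min'_mem _ hne)
  set c := (A.flipMoves X y s s').min' hne
  obtain ⟨hc1, hc2⟩ := hc
  refine ⟨c, ⟨hc1, hc2⟩, ?_, hflip, fun x hx => ?_⟩
  · have hsub : A.flipMoves X y s s' ⊆ Icc c s' :=
      fun c' hc' => mem_Icc.mpr ⟨min'_le _ _ hc', (A.mem_flipMoves.mp hc').1.2⟩
    have := hcard.trans (card_le_card hsub)
    rw [Int.card_Icc] at this
    omega
  · refine (A.pos_lt_pos_iff_of_forall_not_flips (by omega) fun c' hc' hf => ?_).mp (hs x hx)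
    obtain ⟨hc1', hc2'⟩ := hc'
    have := min'_le (A.flipMoves X y s s') c'
      (A.mem_flipMoves.mpr ⟨⟨hc1', by omega⟩, x, hx, hf⟩)
    omega

end Overtake

theorem card_add_card_le_of_overtake {X Y : Finset (Fin N)} {s s' : ℤ} (hss : s ≤ s')
    (hX0 : X.Nonempty) (hY0 : Y.Nonempty)
    (hunit : ∀ c ∈ Set.Ioc s s', ∀ u ∈ X ∪ Y, A.UnitMove c u)
    (hs : ∀ x ∈ X, ∀ y ∈ Y, A.pos s x < A.pos s y)
    (hs' : ∀ x ∈ X, ∀ y ∈ Y, A.pos s' y < A.pos s' x) :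
    (#X + #Y : ℤ) ≤ s' - s + 1 := by
  have hXu : ∀ c ∈ Set.Ioc s s', ∀ x ∈ X, A.UnitMove c x :=
    fun c hc x hx => hunit c hc x (mem_union_left _ hx)
  choose! st hst using fun y hy => exists_first_flips hss hXu
    (fun c hc => hunit c hc y (mem_union_right _ hy)) (fun x hx => hs x hx y hy)
    (fun x hx => hs' x hx y hy) hX0
  have hinj : Set.InjOn st Y := by
    intro y hy y' hy' hyy'
    obtain ⟨hc, -, ⟨x, hx, hfx⟩, hbelow⟩ := hst y hy
    obtain ⟨-, -, ⟨x', hx', hfx'⟩, hbelow'⟩ := hst y' hy'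
    rw [← hyy'] at hfx' hbelow'
    -- just before that move `y` and `y'` sit directly above their partners and above all of `X`
    have e := (hfx.adjacent_swap (hXu _ hc x hx) (hunit _ hc y (mem_union_right _ hy))
      (hbelow x hx)).1
    have e' := (hfx'.adjacent_swap (hXu _ hc x' hx') (hunit _ hc y' (mem_union_right _ hy'))
      (hbelow' x' hx')).1
    have := hbelow x' hx'
    have := hbelow' x hx
    exact A.pos_injective (st y - 1) (by omega)
  have := card_le_card_of_injOn st (t := Icc (s + 1) (s' + 1 - #X))
    (fun y hy => mem_Icc.mpr ⟨by linarith [(hst y hy).1.1], by linarith [(hst y hy).2.1]⟩) hinj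
  rw [Int.card_Icc] at this
  have := hY0.card_pos
  omega

end

section

variable {n : ℕ} (A : AllowableSeq (2 * n))

def InCentralBlock (i : ℤ) (e : ℕ) (u : Fin (2 * n)) : Prop :=
  n - e ≤ A.pos i u ∧ A.pos i u < n + e

def centralUpper (i : ℤ) (e : ℕ) : Finset (Fin (2 * n)) :=
  {u | n ≤ A.pos i u ∧ A.pos i u < n + e}

lemma card_centralUpper (i : ℤ) {e : ℕ} (he : e ≤ n) : #(A.centralUpper i e) = e := by
  rw [centralUpper, A.card_filter_pos_mem_Ico i (by omega)]
  omega

lemma mem_centralUpper {i : ℤ} {e : ℕ} {u : Fin (2 * n)} :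
    u ∈ A.centralUpper i e ↔ n ≤ A.pos i u ∧ A.pos i u < n + e := by
  simp [centralUpper]

lemma centralUpper_nonempty (i : ℤ) {e : ℕ} (he1 : 1 ≤ e) (he : e ≤ n) :
    (A.centralUpper i e).Nonempty :=
  card_pos.mp (by rw [A.card_centralUpper i he]; exact he1)

end

end AllowableSeq

namespace CentSym

variable {n : ℕ} {A : AllowableSeq (2 * n)} {conj : Fin (2 * n) → Fin (2 * n)}
  (hcs : CentSym A conj)
include hcs

lemma pos_add_pos_conj (i : ℤ) (u : Fin (2 * n)) :
    A.pos i u + A.pos i (conj u) = 2 * n - 1 :=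
  hcs i u

lemma conj_ne (u : Fin (2 * n)) : conj u ≠ u := by
  intro h
  have := hcs.pos_add_pos_conj 0 u
  rw [h] at this
  have := A.pos_lt 0 u
  omega

lemma le_pos_iff (i : ℤ) (u : Fin (2 * n)) :
    n ≤ A.pos i u ↔ A.pos i (conj u) < A.pos i u := by
  have := hcs.pos_add_pos_conj i u
  have := A.pos_lt i u
  omega

lemma inCentralBlock_conj_iff {i : ℤ} {e : ℕ} {u : Fin (2 * n)} :
    A.InCentralBlock i e (conj u) ↔ A.InCentralBlock i e u := by
  have := hcs.pos_add_pos_conj i u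
  have := A.pos_lt i u
  unfold AllowableSeq.InCentralBlock
  omega

lemma centre_of_flips_conj {i : ℤ} {u : Fin (2 * n)} (hf : Flips A i u (conj u))
    (hu : A.UnitMove i u) (hv : A.UnitMove i (conj u)) :
    (A.pos (i - 1) u = n - 1 ∨ A.pos (i - 1) u = n) ∧
      A.pos i u = 2 * n - 1 - A.pos (i - 1) u := by
  have h0 := hcs.pos_add_pos_conj (i - 1) u
  have h1 := hcs.pos_add_pos_conj i u
  rcases lt_or_gt_of_ne ((A.pos_injective (i - 1)).ne hf.ne) with hlt | hlt
  · have := hf.adjacent_swap hu hv hlt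
    omega
  · have := hf.symm.adjacent_swap hv hu hlt
    omega

lemma crossingAt_one {i : ℤ} {u : Fin (2 * n)} (hf : Flips A i u (conj u))
    (hunit : ∀ w, A.UnitMove i w) : CrossingAt n A i 1 := by
  obtain ⟨hc, hj⟩ := hcs.centre_of_flips_conj hf (hunit u) (hunit (conj u))
  have h0 := hcs.pos_add_pos_conj (i - 1) u
  have h1 := hcs.pos_add_pos_conj i u
  have hu := A.pos_lt i u
  refine ⟨le_rfl, by omega, fun w (hw1 : n - 1 ≤ A.pos (i - 1) w)
    (hw2 : A.pos (i - 1) w < n + 1) => ?_,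
    Or.inr fun w (hw : A.pos (i - 1) w = n - 1 - 1) => ?_⟩
  · show A.pos i w = 2 * n - 1 - A.pos (i - 1) w
    rcases (by omega : A.pos (i - 1) w = A.pos (i - 1) u ∨
        A.pos (i - 1) w = A.pos (i - 1) (conj u)) with h | h
    · rw [A.pos_injective _ h]
      omega
    · rw [A.pos_injective _ h]
      omega
  · show A.pos i w ≠ n + 1
    have := hunit w
    unfold AllowableSeq.UnitMove at this
    omega

end CentSym

namespace CrossingAt

variable {n : ℕ} {A : AllowableSeq (2 * n)} {i : ℤ} {e : ℕ} (h : CrossingAt n A i e)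
include h

lemma pos_eq {u : Fin (2 * n)} (hu : A.InCentralBlock (i - 1) e u) :
    A.pos i u = 2 * n - 1 - A.pos (i - 1) u :=
  h.2.2.1 u hu.1 hu.2

lemma eq {e' : ℕ} (h' : CrossingAt n A i e') : e = e' := by
  have key : ∀ a b, CrossingAt n A i a → CrossingAt n A i b → ¬ a < b := by
    intro a b ha hb hab
    obtain ⟨u, hu⟩ := A.exists_pos_eq (i - 1) (c := n - a - 1) (by have := hb.2.1; omega)
    have hub := hb.pos_eq (u := u) ⟨by have := ha.1; omega, by omega⟩
    rcases ha.2.2.2 with han | hmax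
    · have := hb.2.1
      omega
    · exact hmax u hu (show A.pos i u = n + a by have := ha.1; have := hb.2.1; omega)
  exact le_antisymm (not_lt.mp (key _ _ h' h)) (not_lt.mp (key _ _ h h'))

lemma flips_conj {conj : Fin (2 * n) → Fin (2 * n)} (hcs : CentSym A conj) {u : Fin (2 * n)}
    (hu : A.InCentralBlock (i - 1) e u) : Flips A i u (conj u) := by
  have h1 := h.pos_eq hu
  have h2 := h.pos_eq (hcs.inCentralBlock_conj_iff.mpr hu)
  have h3 := (A.pos_injective (i - 1)).ne (hcs.conj_ne u).symm
  have := A.pos_lt (i - 1) u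
  have := A.pos_lt (i - 1) (conj u)
  rw [A.flips_iff]
  omega

lemma inCentralBlock_of_mem_centralUpper {u : Fin (2 * n)} (hu : u ∈ A.centralUpper i e) :
    A.InCentralBlock (i - 1) e u ∧ A.pos (i - 1) u + A.pos i u = 2 * n - 1 := by
  rw [A.mem_centralUpper] at hu
  have := A.pos_lt i u
  obtain ⟨v, hv⟩ := A.exists_pos_eq (i - 1) (c := 2 * n - 1 - A.pos i u) (by omega)
  have hvb : A.InCentralBlock (i - 1) e v := ⟨by omega, by omega⟩
  have hvu : v = u := A.pos_injective i (by rw [h.pos_eq hvb]; omega)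
  subst hvu
  exact ⟨hvb, by omega⟩

end CrossingAt

structure CrossingSetting (n t : ℕ) (A : AllowableSeq (2 * n))
    (conj : Fin (2 * n) → Fin (2 * n)) (d : Fin t → ℕ) (m : Fin t → ℤ) : Prop where
  centSym : CentSym A conj
  h_eq : A.h = 2 * n
  genPos : NoncentralGenPos n A
  sig : HasCentralSignature n t A d m

namespace CrossingSetting

variable {n t : ℕ} {A : AllowableSeq (2 * n)} {conj : Fin (2 * n) → Fin (2 * n)}
  {d : Fin t → ℕ} {m : Fin t → ℤ} (S : CrossingSetting n t A conj d m)
include S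

lemma crossingAt (j : Fin t) : CrossingAt n A (m j) (d j) := S.sig.2.2.1 j

lemma one_le_d (j : Fin t) : 1 ≤ d j := (S.crossingAt j).1

lemma d_le (j : Fin t) : d j ≤ n := (S.crossingAt j).2.1

lemma m_mem (j : Fin t) : m j ∈ Icc (1 : ℤ) (2 * n) := S.sig.2.1 j

lemma m_injective : Function.Injective m := S.sig.1.injective

lemma existsUnique_flips {u v : Fin (2 * n)} (huv : u ≠ v) :
    ∃! i, i ∈ Icc (1 : ℤ) (2 * n) ∧ Flips A i u v := by
  have := A.flip_once u v huv
  rw [S.h_eq] at this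
  exact_mod_cast this

lemma pos_two_mul (u : Fin (2 * n)) : A.pos (2 * n) u = 2 * n - 1 - A.pos 0 u := by
  have := A.reversal 0 u
  rw [S.h_eq, zero_add] at this
  exact_mod_cast this

lemma exists_eq_of_crossingAt {i : ℤ} {e : ℕ} (hi : i ∈ Icc (1 : ℤ) (2 * n))
    (h : CrossingAt n A i e) : ∃ j, m j = i ∧ d j = e := by
  by_cases hj : ∃ j, m j = i
  · obtain ⟨j, rfl⟩ := hj
    exact ⟨j, rfl, (S.crossingAt j).eq h⟩
  · push Not at hj
    exact absurd h (S.sig.2.2.2 i hi (fun j => (hj j).symm) e)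

lemma unitMove_or_inCentralBlock {i : ℤ} (hi : i ∈ Icc (1 : ℤ) (2 * n)) (u : Fin (2 * n)) :
    A.UnitMove i u ∨ ∃ j, m j = i ∧ A.InCentralBlock (i - 1) (d j) u := by
  by_cases heq : A.pos i u = A.pos (i - 1) u
  · exact Or.inl ⟨by omega, by omega⟩
  rcases S.genPos i u heq with h | ⟨e, he, h1, h2⟩
  · have h' : A.pos i u + 1 = A.pos (i - 1) u ∨ A.pos (i - 1) u + 1 = A.pos i u := h
    exact Or.inl ⟨by omega, by omega⟩
  · obtain ⟨j, rfl, rfl⟩ := S.exists_eq_of_crossingAt hi he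
    exact Or.inr ⟨j, rfl, h1, h2⟩

lemma exists_inCentralBlock_of_flips_conj {i : ℤ} {u : Fin (2 * n)}
    (hi : i ∈ Icc (1 : ℤ) (2 * n)) (hf : Flips A i u (conj u)) :
    ∃ j, m j = i ∧ A.InCentralBlock (i - 1) (d j) u := by
  rcases S.unitMove_or_inCentralBlock hi u with hu | hu
  swap
  · exact hu
  rcases S.unitMove_or_inCentralBlock hi (conj u) with hv | ⟨j, hj, hv⟩
  swap
  · exact ⟨j, hj, S.centSym.inCentralBlock_conj_iff.mp hv⟩
  obtain ⟨hc, -⟩ := S.centSym.centre_of_flips_conj hf hu hv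
  by_cases hj : ∃ j, m j = i
  · obtain ⟨j, rfl⟩ := hj
    have := S.one_le_d j
    exact ⟨j, rfl, by omega, by omega⟩
  · push Not at hj
    refine absurd (S.centSym.crossingAt_one hf fun w => ?_)
      (S.sig.2.2.2 i hi (fun j h => hj j h.symm) 1)
    rcases S.unitMove_or_inCentralBlock hi w with hw | ⟨j, hj', -⟩
    · exact hw
    · exact absurd hj' (hj j)

lemma exists_inCentralBlock (u : Fin (2 * n)) : ∃ j, A.InCentralBlock (m j - 1) (d j) u := by
  obtain ⟨i, ⟨hi, hf⟩, -⟩ := S.existsUnique_flips (S.centSym.conj_ne u).symm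
  obtain ⟨j, rfl, hj⟩ := S.exists_inCentralBlock_of_flips_conj hi hf
  exact ⟨j, hj⟩

section InCentralBlock

variable {j : Fin t} {u : Fin (2 * n)} (hu : A.InCentralBlock (m j - 1) (d j) u)
include hu

lemma not_flips_conj {c : ℤ} (hc : c ∈ Icc (1 : ℤ) (2 * n)) (hne : c ≠ m j) :
    ¬ Flips A c u (conj u) := fun hf =>
  hne ((S.existsUnique_flips (S.centSym.conj_ne u).symm).unique ⟨hc, hf⟩
    ⟨S.m_mem j, (S.crossingAt j).flips_conj S.centSym hu⟩)

lemma eq_of_inCentralBlock {j' : Fin t} (hu' : A.InCentralBlock (m j' - 1) (d j') u) :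
    j = j' := by
  by_contra hne
  exact S.not_flips_conj hu (S.m_mem j') (S.m_injective.ne (Ne.symm hne))
    ((S.crossingAt j').flips_conj S.centSym hu')

lemma unitMove {c : ℤ} (hc : c ∈ Icc (1 : ℤ) (2 * n)) (hne : c ≠ m j) : A.UnitMove c u := by
  rcases S.unitMove_or_inCentralBlock hc u with h | ⟨j', rfl, h⟩
  · exact h
  · exact absurd (congrArg m (S.eq_of_inCentralBlock hu h)).symm hne

lemma le_pos_iff_le_pos {a b : ℤ} (ha : 0 ≤ a) (hab : a ≤ b) (hb : b ≤ 2 * n)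
    (hj : m j ≤ a ∨ b < m j) : n ≤ A.pos a u ↔ n ≤ A.pos b u := by
  rw [S.centSym.le_pos_iff, S.centSym.le_pos_iff]
  refine A.pos_lt_pos_iff_of_forall_not_flips hab fun c ⟨hc1, hc2⟩ hf =>
    S.not_flips_conj hu (mem_Icc.mpr ⟨by omega, by omega⟩) (by omega) hf.symm

end InCentralBlock

/-- The points raised by crossing switch `i` overtake the upper half of `j` before move `m j`. -/
lemma d_add_d_le {i j : Fin t} (hij : m i < m j) : (d i + d j : ℤ) ≤ m j - m i := by
  obtain ⟨hi1, hi2⟩ := mem_Icc.mp (S.m_mem i)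
  obtain ⟨hj1, hj2⟩ := mem_Icc.mp (S.m_mem j)
  have hdi := S.d_le i
  have hdj := S.d_le j
  have hX : ∀ x ∈ A.centralUpper (m i) (d i), A.InCentralBlock (m i - 1) (d i) x :=
    fun x hx => ((S.crossingAt i).inCentralBlock_of_mem_centralUpper hx).1
  have hY : ∀ y ∈ A.centralUpper (m j - 1) (d j), A.InCentralBlock (m j - 1) (d j) y :=
    fun y hy => by rw [A.mem_centralUpper] at hy; exact ⟨by omega, hy.2⟩
  have key := A.card_add_card_le_of_overtake (X := A.centralUpper (m i) (d i))
    (Y := A.centralUpper (m j - 1) (d j)) (s := m i) (s' := m j - 1) (by omega)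
    (A.centralUpper_nonempty _ (S.one_le_d i) hdi) (A.centralUpper_nonempty _ (S.one_le_d j) hdj)
    ?_ ?_ ?_
  · rw [A.card_centralUpper _ hdi, A.card_centralUpper _ hdj] at key
    omega
  · rintro c ⟨hc1, hc2⟩ u hu
    rcases mem_union.mp hu with hu | hu
    · exact S.unitMove (hX u hu) (mem_Icc.mpr ⟨by omega, by omega⟩) (by omega)
    · exact S.unitMove (hY u hu) (mem_Icc.mpr ⟨by omega, by omega⟩) (by omega)
  · intro x hx y hy
    have hx' := A.mem_centralUpper.mp hx
    have hy' := A.mem_centralUpper.mp hy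
    have hup := (S.le_pos_iff_le_pos (hY y hy) (a := m i) (b := m j - 1) (by omega) (by omega)
      (by omega) (Or.inr (by omega))).mpr hy'.1
    by_contra hlt
    have := S.eq_of_inCentralBlock (hY y hy) (hX y (A.mem_centralUpper.mpr ⟨hup, by omega⟩))
    subst this
    omega
  · intro x hx y hy
    have hx' := A.mem_centralUpper.mp hx
    have hy' := A.mem_centralUpper.mp hy
    have hup := (S.le_pos_iff_le_pos (hX x hx) (a := m i) (b := m j - 1) (by omega) (by omega)
      (by omega) (Or.inl le_rfl)).mp hx'.1
    by_contra hlt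
    have := S.eq_of_inCentralBlock (j' := j) (hX x hx) ⟨by omega, by omega⟩
    subst this
    omega

section FirstCrossing

variable {i : Fin t} (h1 : m i = 1)
include h1

/-- The points raised by crossing switch `j` overtake those raised by crossing switch `i` by
time `2n`, when the latter are back where move `1` put them. -/
lemma m_add_d_add_d_le {j : Fin t} (hij : i ≠ j) : m j + d i + d j ≤ 2 * n + 1 := by
  obtain ⟨hj1, hj2⟩ := mem_Icc.mp (S.m_mem j)
  have hmj : m j ≠ 1 := h1 ▸ S.m_injective.ne hij.symm
  have h0 : m i - 1 = 0 := by omega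
  have hdi := S.d_le i
  have hdj := S.d_le j
  have hX := fun x (hx : x ∈ A.centralUpper (m j) (d j)) =>
    (S.crossingAt j).inCentralBlock_of_mem_centralUpper hx
  have hY := fun y (hy : y ∈ A.centralUpper (m i) (d i)) =>
    (S.crossingAt i).inCentralBlock_of_mem_centralUpper hy
  have key := A.card_add_card_le_of_overtake (X := A.centralUpper (m j) (d j))
    (Y := A.centralUpper (m i) (d i)) (s := m j) (s' := 2 * n) (by omega)
    (A.centralUpper_nonempty _ (S.one_le_d j) hdj) (A.centralUpper_nonempty _ (S.one_le_d i) hdi)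
    ?_ ?_ ?_
  · rw [A.card_centralUpper _ hdi, A.card_centralUpper _ hdj] at key
    omega
  · rintro c ⟨hc1, hc2⟩ u hu
    rcases mem_union.mp hu with hu | hu
    · exact S.unitMove (hX u hu).1 (mem_Icc.mpr ⟨by omega, by omega⟩) (by omega)
    · exact S.unitMove (hY u hu).1 (mem_Icc.mpr ⟨by omega, by omega⟩) (by omega)
  · intro x hx y hy
    have hx' := A.mem_centralUpper.mp hx
    have hup := (S.le_pos_iff_le_pos (hY y hy).1 (a := m i) (b := m j) (by omega) (by omega)
      (by omega) (Or.inl le_rfl)).mp (A.mem_centralUpper.mp hy).1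
    by_contra hlt
    exact hij (S.eq_of_inCentralBlock (hY y hy).1
      (hX y (A.mem_centralUpper.mpr ⟨hup, by omega⟩)).1)
  · intro x hx y hy
    obtain ⟨hxb, hxs⟩ := hX x hx
    obtain ⟨⟨hyb1, hyb2⟩, hys⟩ := hY y hy
    have hx' := A.mem_centralUpper.mp hx
    have hy' := A.mem_centralUpper.mp hy
    have hlow : ¬ n ≤ A.pos 0 x := fun h => by
      have := (S.le_pos_iff_le_pos hxb (a := 0) (b := m j - 1) le_rfl (by omega) (by omega)
        (Or.inr (by omega))).mp h
      omega
    have hout : ¬ A.InCentralBlock (m i - 1) (d i) x := fun h =>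
      hij (S.eq_of_inCentralBlock h hxb)
    rw [h0] at hout
    unfold AllowableSeq.InCentralBlock at hout
    rw [h0] at hyb1 hyb2 hys
    rw [S.pos_two_mul, S.pos_two_mul]
    omega

lemma pos_lt_of_not_lowerHalf {u : Fin (2 * n)}
    (hu : ¬ (n - d i ≤ A.pos 0 u ∧ A.pos 0 u < n)) : A.pos n u < 2 * n - d i := by
  have hdi := S.d_le i
  obtain ⟨j, hj⟩ := S.exists_inCentralBlock u
  obtain ⟨hj1, hj2⟩ := mem_Icc.mp (S.m_mem j)
  have hjump := (S.crossingAt j).pos_eq hj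
  have hunit : ∀ c ∈ Set.Ioc (1 : ℤ) (2 * n), c ≠ m j → A.UnitMove c u :=
    fun c ⟨hc1, hc2⟩ => S.unitMove hj (mem_Icc.mpr ⟨by omega, hc2⟩)
  by_cases hji : j = i
  · subst hji
    have hlow := S.le_pos_iff_le_pos hj (a := m j) (b := n) (by omega) (by omega) (by omega)
      (Or.inl le_rfl)
    obtain ⟨hb1, hb2⟩ := hj
    rw [h1] at hlow
    rw [h1, sub_self] at hjump hb1 hb2
    omega
  have hmj : m j ≠ 1 := h1 ▸ S.m_injective.ne hji
  rcases le_or_gt (m j) n with hjn | hjn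
  · have hgap := S.d_add_d_le (i := i) (j := j) (by omega)
    have htraj := abs_le.mp (A.abs_pos_sub_pos_le hjn fun c hc =>
      hunit c ⟨by linarith [hc.1], by linarith [hc.2]⟩ (by linarith [hc.1]))
    obtain ⟨hb1, hb2⟩ := hj
    omega
  · have hlate := S.m_add_d_add_d_le h1 (Ne.symm hji)
    have htraj := abs_le.mp (A.abs_pos_sub_pos_le (a := n) (b := m j - 1) (by omega)
      fun c hc => hunit c ⟨by linarith [hc.1], by linarith [hc.2]⟩ (by linarith [hc.2]))
    obtain ⟨hb1, hb2⟩ := hj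
    omega

lemma lowerHalf_iff_top (u : Fin (2 * n)) :
    (n - d i ≤ A.pos 0 u ∧ A.pos 0 u < n) ↔
      (2 * n - d i ≤ A.pos n u ∧ A.pos n u < 2 * n) := by
  have hdi := S.d_le i
  have heq : ({u | 2 * n - d i ≤ A.pos n u ∧ A.pos n u < 2 * n} : Finset (Fin (2 * n))) =
      ({u | n - d i ≤ A.pos 0 u ∧ A.pos 0 u < n} : Finset (Fin (2 * n))) := by
    refine eq_of_subset_of_card_le (fun u hu => ?_) ?_
    · simp only [mem_filter, mem_univ, true_and] at hu ⊢
      by_contra h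
      have := S.pos_lt_of_not_lowerHalf h1 h
      omega
    · rw [A.card_filter_pos_mem_Ico _ le_rfl, A.card_filter_pos_mem_Ico _ (by omega)]
      omega
  simpa using (Finset.ext_iff.mp heq u).symm

end FirstCrossing

lemma pos_lt_pos_iff_of_inCentralBlock {j : Fin t} {u v : Fin (2 * n)}
    (hu : A.InCentralBlock (m j - 1) (d j) u) (hv : A.InCentralBlock (m j - 1) (d j) v)
    (huv : u ≠ v) {b : ℤ} (hb : m j ≤ b) (hb' : b ≤ 2 * n) :
    A.pos b u < A.pos b v ↔ A.pos (m j - 1) v < A.pos (m j - 1) u := by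
  have hne := (A.pos_injective (m j - 1)).ne huv
  have := A.pos_lt (m j - 1) u
  have := A.pos_lt (m j - 1) v
  have hjump : A.pos (m j) u < A.pos (m j) v ↔ A.pos (m j - 1) v < A.pos (m j - 1) u := by
    rw [(S.crossingAt j).pos_eq hu, (S.crossingAt j).pos_eq hv]
    omega
  have hf : Flips A (m j) u v := by
    rw [A.flips_iff, hjump]
    omega
  obtain ⟨hj1, -⟩ := mem_Icc.mp (S.m_mem j)
  rw [← hjump]
  refine (A.pos_lt_pos_iff_of_forall_not_flips hb fun c ⟨hc1, hc2⟩ hfc => ?_).symm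
  have := (S.existsUnique_flips huv).unique ⟨mem_Icc.mpr ⟨by omega, by omega⟩, hfc⟩
    ⟨S.m_mem j, hf⟩
  omega

lemma pos_n_eq {i : Fin t} (h1 : m i = 1) {k : ℕ} (hk1 : 1 ≤ k) (hk2 : k ≤ d i)
    {p : Fin (2 * n)} (hp : A.pos 0 p = n - d i + (k - 1)) : A.pos n p = 2 * n - k := by
  have hdi := S.d_le i
  have h0 : m i - 1 = 0 := by omega
  have hpT := (S.lowerHalf_iff_top h1 p).mp ⟨by omega, by omega⟩
  have horder : ∀ u, n - d i ≤ A.pos 0 u → A.pos 0 u < n → u ≠ p →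
      (A.pos n p < A.pos n u ↔ A.pos 0 u < A.pos 0 p) := fun u hu1 hu2 hup => by
    have hb := S.pos_lt_pos_iff_of_inCentralBlock (j := i) (b := n)
      (by rw [h0]; exact ⟨by omega, by omega⟩) (by rw [h0]; exact ⟨hu1, by omega⟩)
      hup.symm (by omega) (by omega)
    rwa [h0] at hb
  have key : ({u | A.pos n p + 1 ≤ A.pos n u ∧ A.pos n u < 2 * n} : Finset (Fin (2 * n))) =
      ({u | n - d i ≤ A.pos 0 u ∧ A.pos 0 u < A.pos 0 p} : Finset (Fin (2 * n))) := by
    ext u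
    simp only [mem_filter, mem_univ, true_and]
    by_cases hup : u = p
    · subst hup
      omega
    constructor
    · rintro ⟨hu1, hu2⟩
      obtain ⟨hu3, hu4⟩ := (S.lowerHalf_iff_top h1 u).mpr ⟨by omega, hu2⟩
      exact ⟨hu3, (horder u hu3 hu4 hup).mp (by omega)⟩
    · rintro ⟨hu1, hu2⟩
      exact ⟨(horder u hu1 (by omega) hup).mpr hu2, A.pos_lt _ _⟩
  have := congrArg card key
  rw [A.card_filter_pos_mem_Ico _ le_rfl, A.card_filter_pos_mem_Ico _ (by omega)] at this
  omega

end CrossingSetting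

theorem stmt_10_general (n t : ℕ) (ht : 0 < t) (A : AllowableSeq (2 * n))
    (conj : Fin (2 * n) → Fin (2 * n)) (hcs : CentSym A conj)
    (henc : A.h = 2 * n) (hgen : NoncentralGenPos n A)
    (d : Fin t → ℕ) (m : Fin t → ℤ) (hsig : HasCentralSignature n t A d m)
    (hfirst : m ⟨0, ht⟩ = 1)
    (k : ℕ) (hk1 : 1 ≤ k) (hk2 : k ≤ d ⟨0, ht⟩)
    (p : Fin (2 * n)) (hp : ((A.perm 0) p : ℕ) = n - d ⟨0, ht⟩ + (k - 1)) :
    ((A.perm (n : ℤ)) p : ℕ) = 2 * n - k ∧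
    (k = 1 → ((A.perm (n : ℤ)) p : ℕ) = 2 * n - 1 ∧ ((A.perm (n : ℤ)) (conj p) : ℕ) = 0) := by
  have hpn : A.pos n p = 2 * n - k :=
    CrossingSetting.pos_n_eq ⟨hcs, henc, hgen, hsig⟩ hfirst hk1 hk2 hp
  have hsum := hcs.pos_add_pos_conj n p
  refine ⟨hpn, fun hk => ⟨hk ▸ hpn, show A.pos n (conj p) = 0 by omega⟩⟩

/-- In an even-near-critical centrally symmetric allowable sequence of `2n` points in
noncentral general position whose first move contains a crossing switch of half-length
`d₁`, the point `s₁(k)` occupies position `2n - k + 1` (1-indexed; `2n - k` 0-indexed)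
in the permutation `π_n`; in particular `s₁(1)` reaches the last position and its
conjugate the first position. -/
theorem stmt_10 (n t : ℕ) (hn : 0 < n) (ht : 0 < t) (A : AllowableSeq (2 * n))
    (conj : Fin (2 * n) → Fin (2 * n)) (hcs : CentSym A conj)
    (henc : A.h = 2 * n) (hgen : NoncentralGenPos n A)
    (d : Fin t → ℕ) (m : Fin t → ℤ) (hsig : HasCentralSignature n t A d m)
    (hfirst : m ⟨0, ht⟩ = 1)
    (k : ℕ) (hk1 : 1 ≤ k) (hk2 : k ≤ d ⟨0, ht⟩)
    (p : Fin (2 * n)) (hp : ((A.perm 0) p : ℕ) = n - d ⟨0, ht⟩ + (k - 1)) :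
    ((A.perm (n : ℤ)) p : ℕ) = 2 * n - k ∧
    (k = 1 → ((A.perm (n : ℤ)) p : ℕ) = 2 * n - 1 ∧ ((A.perm (n : ℤ)) (conj p) : ℕ) = 0) :=
  stmt_10_general n t ht A conj hcs henc hgen d m hsig hfirst k hk1 hk2 p hp
end

section
/- For every integer d ≥ 2, the set of 2(d+2) points consisting of (0, ±k) for k = 1, ..., d, together with (±1, 0), (1, 1), and (-1, -1), determines exactly 2(d+2) directions, and is hence direction-near-critical. -/
lemma pne (x y : ℝ) (h : x ≠ 0 ∨ y ≠ 0) : ((x,y) : ℝ×ℝ) ≠ 0 := by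
  simp [Prod.ext_iff]; tauto

lemma mk_eq_of_slope (v : ℝ×ℝ) (hv : v ≠ 0) (s : ℝ) (h1 : v.1 ≠ 0) (h2 : v.2 = s * v.1) :
    Projectivization.mk ℝ v hv = Projectivization.mk ℝ ((1, s) : ℝ×ℝ)
      (pne 1 s (Or.inl one_ne_zero)) := by
  rw [Projectivization.mk_eq_mk_iff']
  refine ⟨v.1, ?_⟩
  have hvv : v = (v.1, v.2) := rfl
  rw [hvv, Prod.smul_def]
  simp [h2, mul_comm]

lemma mk_eq_of_vert (v : ℝ×ℝ) (hv : v ≠ 0) (h1 : v.1 = 0) :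
    Projectivization.mk ℝ v hv = Projectivization.mk ℝ ((0, 1) : ℝ×ℝ)
      (pne 0 1 (Or.inr one_ne_zero)) := by
  rw [Projectivization.mk_eq_mk_iff']
  refine ⟨v.2, ?_⟩
  have hvv : v = (v.1, v.2) := rfl
  rw [hvv, Prod.smul_def]
  simp [h1]

lemma mk_inj : Function.Injective
    (fun s : ℝ => Projectivization.mk ℝ ((1,s):ℝ×ℝ) (pne 1 s (Or.inl one_ne_zero))) := by
  intro s t h
  simp only [Projectivization.mk_eq_mk_iff'] at h
  obtain ⟨a, ha⟩ := h
  simp only [Prod.smul_def, Prod.ext_iff, smul_eq_mul, mul_one] at ha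
  obtain ⟨h1, h2⟩ := ha
  rw [h1, one_mul] at h2; exact h2.symm

lemma mk_vert_ne (s : ℝ) :
    Projectivization.mk ℝ ((0,1):ℝ×ℝ) (pne 0 1 (Or.inr one_ne_zero)) ≠
      Projectivization.mk ℝ ((1,s):ℝ×ℝ) (pne 1 s (Or.inl one_ne_zero)) := by
  intro h
  rw [Projectivization.mk_eq_mk_iff'] at h
  obtain ⟨a, ha⟩ := h
  simp only [Prod.smul_def, Prod.ext_iff, smul_eq_mul, mul_one] at ha
  obtain ⟨h1, h2⟩ := ha
  rw [h1, zero_mul] at h2; exact one_ne_zero h2.symm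

/-- The set of directions (parallelism classes of connecting lines) determined by a
planar point set `P`, encoded as points of the real projective line. -/
def directions (P : Set (ℝ × ℝ)) : Set (Projectivization ℝ (ℝ × ℝ)) :=
  {d | ∃ p ∈ P, ∃ q ∈ P, ∃ h : p - q ≠ 0, d = Projectivization.mk ℝ (p - q) h}

theorem stmt_16 (d : ℕ) (hd : 2 ≤ d) :
    (directions
      ({p : ℝ × ℝ | ∃ k : ℕ, 1 ≤ k ∧ k ≤ d ∧ (p = (0, (k:ℝ)) ∨ p = (0, -(k:ℝ)))} ∪
        {(1,0),(-1,0),(1,1),(-1,-1)})).ncard = 2 * (d + 2) := by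
  set P : Set (ℝ × ℝ) :=
    ({p : ℝ × ℝ | ∃ k : ℕ, 1 ≤ k ∧ k ≤ d ∧ (p = (0, (k:ℝ)) ∨ p = (0, -(k:ℝ)))} ∪
        {(1,0),(-1,0),(1,1),(-1,-1)}) with hP
  set S : Set ℝ := insert (1/2) ((fun m : ℤ => (m:ℝ)) '' Set.Icc (-(d:ℤ)) (d+1)) with hS
  set f : ℝ → Projectivization ℝ (ℝ × ℝ) :=
    fun s => Projectivization.mk ℝ ((1,s):ℝ×ℝ) (pne 1 s (Or.inl one_ne_zero)) with hf
  set x₀ : Projectivization ℝ (ℝ × ℝ) :=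
    Projectivization.mk ℝ ((0,1):ℝ×ℝ) (pne 0 1 (Or.inr one_ne_zero)) with hx₀
  -- integer slopes are in S
  have memint : ∀ m : ℤ, -(d:ℤ) ≤ m → m ≤ (d:ℤ)+1 → (m:ℝ) ∈ S := by
    intro m h1 h2
    exact Set.mem_insert_iff.2 (Or.inr ⟨m, Set.mem_Icc.2 ⟨h1, h2⟩, rfl⟩)
  have slopemem : ∀ (a b : ℝ) (n : ℤ), -(d:ℤ) ≤ n → n ≤ (d:ℤ)+1 → a = (n:ℝ) * b → b ≠ 0 →
      a / b ∈ S := by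
    intro a b n h1 h2 hab hb
    have : a / b = (n:ℝ) := by rw [hab]; field_simp
    rw [this]; exact memint n h1 h2
  have halfmem : (1/2 : ℝ) ∈ S := Set.mem_insert _ _
  -- axis points, described uniformly with integer coordinates
  have axis : ∀ p ∈ P, (∃ m : ℤ, -(d:ℤ) ≤ m ∧ m ≤ d ∧ p = (0, (m:ℝ))) ∨
      p = (1,0) ∨ p = (-1,0) ∨ p = (1,1) ∨ p = (-1,-1) := by
    intro p hp
    rcases hp with ⟨k, hk1, hk2, hp | hp⟩ | hp
    · exact Or.inl ⟨(k:ℤ), by omega, by omega, by rw [hp]; push_cast; rfl⟩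
    · exact Or.inl ⟨-(k:ℤ), by omega, by omega, by rw [hp]; push_cast; rfl⟩
    · simp only [Set.mem_insert_iff, Set.mem_singleton_iff] at hp
      tauto
  -- the slope of any connecting line is in S (or the line is vertical)
  have claimAux : ∀ p q : ℝ×ℝ,
      ((∃ m : ℤ, -(d:ℤ) ≤ m ∧ m ≤ d ∧ p = (0, (m:ℝ))) ∨
        p = (1,0) ∨ p = (-1,0) ∨ p = (1,1) ∨ p = (-1,-1)) →
      ((∃ m : ℤ, -(d:ℤ) ≤ m ∧ m ≤ d ∧ q = (0, (m:ℝ))) ∨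
        q = (1,0) ∨ q = (-1,0) ∨ q = (1,1) ∨ q = (-1,-1)) →
      p.1 = q.1 ∨ (p.2 - q.2)/(p.1 - q.1) ∈ S := by
    intro p q hp hq
    rcases hp with ⟨m, hm1, hm2, rfl⟩ | rfl | rfl | rfl | rfl <;>
      rcases hq with ⟨n, hn1, hn2, rfl⟩ | rfl | rfl | rfl | rfl
    -- p axis
    · exact Or.inl rfl
    · exact Or.inr (slopemem ((m:ℝ) - 0) ((0:ℝ) - 1) (-m) (by omega) (by omega)
        (by push_cast; ring) (by norm_num))
    · exact Or.inr (slopemem ((m:ℝ) - 0) ((0:ℝ) - (-1)) m (by omega) (by omega)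
        (by push_cast; ring) (by norm_num))
    · exact Or.inr (slopemem ((m:ℝ) - 1) ((0:ℝ) - 1) (1-m) (by omega) (by omega)
        (by push_cast; ring) (by norm_num))
    · exact Or.inr (slopemem ((m:ℝ) - (-1)) ((0:ℝ) - (-1)) (m+1) (by omega) (by omega)
        (by push_cast; ring) (by norm_num))
    -- p = (1,0)
    · exact Or.inr (slopemem ((0:ℝ) - n) ((1:ℝ) - 0) (-n) (by omega) (by omega)
        (by push_cast; ring) (by norm_num))
    · exact Or.inl rfl
    · exact Or.inr (slopemem ((0:ℝ) - 0) ((1:ℝ) - (-1)) 0 (by omega) (by omega)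
        (by norm_num) (by norm_num))
    · exact Or.inl rfl
    · refine Or.inr ?_
      have h12 : (((0:ℝ) - (-1))/((1:ℝ) - (-1)) : ℝ) = 1/2 := by norm_num
      show ((0:ℝ) - (-1))/((1:ℝ) - (-1)) ∈ S
      rw [h12]; exact halfmem
    -- p = (-1,0)
    · exact Or.inr (slopemem ((0:ℝ) - n) ((-1:ℝ) - 0) n (by omega) (by omega)
        (by push_cast; ring) (by norm_num))
    · exact Or.inr (slopemem ((0:ℝ) - 0) ((-1:ℝ) - 1) 0 (by omega) (by omega)
        (by norm_num) (by norm_num))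
    · exact Or.inl rfl
    · refine Or.inr ?_
      have h12 : (((0:ℝ) - 1)/((-1:ℝ) - 1) : ℝ) = 1/2 := by norm_num
      show ((0:ℝ) - 1)/((-1:ℝ) - 1) ∈ S
      rw [h12]; exact halfmem
    · exact Or.inl rfl
    -- p = (1,1)
    · exact Or.inr (slopemem ((1:ℝ) - n) ((1:ℝ) - 0) (1-n) (by omega) (by omega)
        (by push_cast; ring) (by norm_num))
    · exact Or.inl rfl
    · refine Or.inr ?_
      have h12 : (((1:ℝ) - 0)/((1:ℝ) - (-1)) : ℝ) = 1/2 := by norm_num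
      show ((1:ℝ) - 0)/((1:ℝ) - (-1)) ∈ S
      rw [h12]; exact halfmem
    · exact Or.inl rfl
    · exact Or.inr (slopemem ((1:ℝ) - (-1)) ((1:ℝ) - (-1)) 1 (by omega) (by omega)
        (by norm_num) (by norm_num))
    -- p = (-1,-1)
    · exact Or.inr (slopemem ((-1:ℝ) - n) ((-1:ℝ) - 0) (n+1) (by omega) (by omega)
        (by push_cast; ring) (by norm_num))
    · refine Or.inr ?_
      have h12 : (((-1:ℝ) - 0)/((-1:ℝ) - 1) : ℝ) = 1/2 := by norm_num
      show ((-1:ℝ) - 0)/((-1:ℝ) - 1) ∈ S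
      rw [h12]; exact halfmem
    · exact Or.inl rfl
    · exact Or.inr (slopemem ((-1:ℝ) - 1) ((-1:ℝ) - 1) 1 (by omega) (by omega)
        (by norm_num) (by norm_num))
    · exact Or.inl rfl
  -- membership helpers for P
  have specmem : ∀ p : ℝ×ℝ, (p = (1,0) ∨ p = (-1,0) ∨ p = (1,1) ∨ p = (-1,-1)) → p ∈ P := by
    intro p hp
    refine Or.inr ?_
    simp only [Set.mem_insert_iff, Set.mem_singleton_iff]
    tauto
  have axmem : ∀ m : ℤ, 1 ≤ m → m ≤ (d:ℤ) → ((0:ℝ), (m:ℝ)) ∈ P := by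
    intro m h1 h2
    refine Or.inl ⟨m.toNat, by omega, by omega, Or.inl ?_⟩
    have : ((m.toNat : ℕ) : ℝ) = (m : ℝ) := by
      exact_mod_cast congrArg (Int.cast : ℤ → ℝ) (Int.toNat_of_nonneg (by omega))
    rw [this]
  have axmem' : ∀ m : ℤ, -(d:ℤ) ≤ m → m ≤ -1 → ((0:ℝ), (m:ℝ)) ∈ P := by
    intro m h1 h2
    refine Or.inl ⟨(-m).toNat, by omega, by omega, Or.inr ?_⟩
    have : (((-m).toNat : ℕ) : ℝ) = ((-m : ℤ) : ℝ) := by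
      exact_mod_cast congrArg (Int.cast : ℤ → ℝ) (Int.toNat_of_nonneg (by omega))
    rw [this]; push_cast; ring_nf
  -- the main set identity
  have hDir : directions P = insert x₀ (f '' S) := by
    ext x
    constructor
    · rintro ⟨p, hp, q, hq, hne, rfl⟩
      by_cases hx : p.1 - q.1 = 0
      · exact Or.inl (mk_eq_of_vert _ hne (by simpa using hx))
      · refine Or.inr ⟨(p.2 - q.2)/(p.1 - q.1), ?_, ?_⟩
        · rcases claimAux p q (axis p hp) (axis q hq) with h | h
          · exact absurd (by rw [h]; ring) hx
          · exact h
        · refine (mk_eq_of_slope _ hne _ (by simpa using hx) ?_).symm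
          have h1 : (p - q).1 = p.1 - q.1 := rfl
          have h2 : (p - q).2 = p.2 - q.2 := rfl
          rw [h1, h2, div_mul_cancel₀ _ hx]
    · rintro (rfl | ⟨s, hs, rfl⟩)
      · refine ⟨(0, 2), ?_, (0, 1), ?_, ?_, ?_⟩
        · exact Or.inl ⟨2, by omega, hd, Or.inl (by norm_num)⟩
        · exact Or.inl ⟨1, le_refl 1, by omega, Or.inl (by norm_num)⟩
        · norm_num [Prod.mk_sub_mk, Prod.ext_iff]
        · exact (mk_eq_of_vert _ _ (by norm_num [Prod.mk_sub_mk])).symm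
      · rcases Set.mem_insert_iff.1 hs with rfl | ⟨m, hm, rfl⟩
        · refine ⟨(1, 0), specmem _ (Or.inl rfl), (-1, -1),
            specmem _ (Or.inr (Or.inr (Or.inr rfl))), ?_, ?_⟩
          · norm_num [Prod.mk_sub_mk, Prod.ext_iff]
          · exact (mk_eq_of_slope _ _ _ (by norm_num [Prod.mk_sub_mk])
              (by norm_num [Prod.mk_sub_mk])).symm
        · rw [Set.mem_Icc] at hm
          rcases lt_trichotomy m 0 with hm0 | rfl | hm0
          · -- negative slope m
            refine ⟨(0, (m:ℝ)), axmem' m hm.1 (by omega), (-1, 0),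
              specmem _ (Or.inr (Or.inl rfl)), ?_, ?_⟩
            · norm_num [Prod.mk_sub_mk, Prod.ext_iff]
            · exact (mk_eq_of_slope _ _ _ (by norm_num [Prod.mk_sub_mk])
                (by norm_num [Prod.mk_sub_mk])).symm
          · -- slope 0
            refine ⟨(1, 0), specmem _ (Or.inl rfl), (-1, 0),
              specmem _ (Or.inr (Or.inl rfl)), ?_, ?_⟩
            · norm_num [Prod.mk_sub_mk, Prod.ext_iff]
            · exact (mk_eq_of_slope _ _ _ (by norm_num [Prod.mk_sub_mk])
                (by norm_num [Prod.mk_sub_mk])).symm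
          · by_cases hmd : m ≤ (d:ℤ)
            · refine ⟨(0, (m:ℝ)), axmem m (by omega) hmd, (-1, 0),
                specmem _ (Or.inr (Or.inl rfl)), ?_, ?_⟩
              · norm_num [Prod.mk_sub_mk, Prod.ext_iff]
              · exact (mk_eq_of_slope _ _ _ (by norm_num [Prod.mk_sub_mk])
                  (by norm_num [Prod.mk_sub_mk])).symm
            · -- m = d+1
              have hmd1 : (m:ℝ) = (d:ℝ) + 1 := by
                have : m = (d:ℤ) + 1 := by omega
                rw [this]; push_cast; ring
              refine ⟨(0, (d:ℝ)), axmem d (by omega) (le_refl _), (-1, -1),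
                specmem _ (Or.inr (Or.inr (Or.inr rfl))), ?_, ?_⟩
              · norm_num [Prod.mk_sub_mk, Prod.ext_iff]
              · refine (mk_eq_of_slope _ _ _ (by norm_num [Prod.mk_sub_mk]) ?_).symm
                simp only [Prod.mk_sub_mk]
                rw [hmd1]; norm_num
  -- counting
  rw [hDir]
  have hSfin : S.Finite := Set.Finite.insert _ ((Set.finite_Icc _ _).image _)
  have hnm : x₀ ∉ f '' S := by
    rintro ⟨s, -, h⟩
    exact mk_vert_ne s h.symm
  rw [Set.ncard_insert_of_notMem hnm (hSfin.image _),
    Set.ncard_image_of_injective _ mk_inj]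
  have hnm2 : (1/2 : ℝ) ∉ (fun m : ℤ => (m:ℝ)) '' Set.Icc (-(d:ℤ)) (d+1) := by
    rintro ⟨m, -, hm⟩
    have h2 : ((2*m : ℤ) : ℝ) = 1 := by push_cast; linarith
    have : (2*m : ℤ) = 1 := by exact_mod_cast h2
    omega
  rw [hS, Set.ncard_insert_of_notMem hnm2 ((Set.finite_Icc _ _).image _),
    Set.ncard_image_of_injective _ (fun a b h => by exact_mod_cast h),
    ← Finset.coe_Icc, Set.ncard_coe_finset, Int.card_Icc]
  omega
end

section
/- For every real λ > 1 and integers s, t ≥ 1, the exponential cross EX*_λ(s,t) = {(±λ^i, 0) : 0 ≤ i ≤ s} ∪ {(0, ±λ^j) : 0 ≤ j ≤ t} of 2(s+t+2) points determines exactly 2(s+t+2) directions, and is hence direction-near-critical. -/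
namespace Stmt17Aux

/-- Direction with slope `r`. -/
noncomputable def mdir (r : ℝ) : Projectivization ℝ (ℝ × ℝ) :=
  Projectivization.mk ℝ (1, r) (fun h => one_ne_zero (congrArg Prod.fst h))

/-- The vertical direction. -/
noncomputable def vdir : Projectivization ℝ (ℝ × ℝ) :=
  Projectivization.mk ℝ (0, 1) (fun h => one_ne_zero (congrArg Prod.snd h))

lemma mdir_injective : Function.Injective mdir := by
  intro a b hab
  rw [mdir, mdir, Projectivization.mk_eq_mk_iff] at hab
  obtain ⟨c, hc⟩ := hab
  simp only [Units.smul_def, Prod.smul_mk, smul_eq_mul, Prod.mk.injEq, mul_one] at hc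
  obtain ⟨h1, h2⟩ := hc
  rw [h1, one_mul] at h2
  exact h2.symm

lemma mdir_ne_vdir (r : ℝ) : mdir r ≠ vdir := by
  rw [mdir, vdir, Ne, Projectivization.mk_eq_mk_iff]
  rintro ⟨c, hc⟩
  simp only [Units.smul_def, Prod.smul_mk, smul_eq_mul, Prod.mk.injEq, mul_zero,
    mul_one] at hc
  exact one_ne_zero hc.1.symm

lemma mk_eq_of_eq {v w : ℝ × ℝ} (h : v ≠ 0) (e : v = w) :
    Projectivization.mk ℝ v h = Projectivization.mk ℝ w (e ▸ h) := by
  subst e; rfl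

lemma mk_eq_mdir {x y : ℝ} (hx : x ≠ 0) (h : ((x, y) : ℝ × ℝ) ≠ 0) :
    Projectivization.mk ℝ (x, y) h = mdir (y / x) := by
  rw [mdir, Projectivization.mk_eq_mk_iff]
  refine ⟨Units.mk0 x hx, ?_⟩
  simp only [Units.smul_def, Units.val_mk0, Prod.smul_mk, smul_eq_mul, mul_one,
    Prod.mk.injEq, true_and]
  field_simp

lemma mk_sub_eq_mdir {p q : ℝ × ℝ} (h : p - q ≠ 0) {x y : ℝ} (e : p - q = (x, y))
    (hx : x ≠ 0) : Projectivization.mk ℝ (p - q) h = mdir (y / x) := by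
  rw [mk_eq_of_eq h e, mk_eq_mdir hx]

lemma mk_eq_vdir {y : ℝ} (hy : y ≠ 0) (h : ((0, y) : ℝ × ℝ) ≠ 0) :
    Projectivization.mk ℝ (0, y) h = vdir := by
  rw [vdir, Projectivization.mk_eq_mk_iff]
  refine ⟨Units.mk0 y hy, ?_⟩
  simp [Units.smul_def, Prod.smul_mk]

lemma mk_sub_eq_vdir {p q : ℝ × ℝ} (h : p - q ≠ 0) {y : ℝ} (e : p - q = (0, y)) :
    Projectivization.mk ℝ (p - q) h = vdir := by
  have hy : y ≠ 0 := by
    rintro rfl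
    exact h (by rw [e]; rfl)
  rw [mk_eq_of_eq h e, mk_eq_vdir hy]

section

variable (lam : ℝ) (s t : ℕ)

def cross : Set (ℝ × ℝ) :=
  {p : ℝ × ℝ | ∃ i ≤ s, p = (lam ^ i, 0) ∨ p = (-lam ^ i, 0)} ∪
    {p : ℝ × ℝ | ∃ j ≤ t, p = (0, lam ^ j) ∨ p = (0, -lam ^ j)}

def slopes : Set ℝ :=
  insert 0 ((fun k : ℤ => lam ^ k) '' Set.Icc (-(s : ℤ)) (t : ℤ) ∪
    (fun k : ℤ => -lam ^ k) '' Set.Icc (-(s : ℤ)) (t : ℤ))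

variable {lam s t}

lemma mem_cross_elim {p : ℝ × ℝ} (hp : p ∈ cross lam s t) :
    (∃ ε : ℝ, (ε = 1 ∨ ε = -1) ∧ ∃ i ≤ s, p = (ε * lam ^ i, 0)) ∨
      (∃ δ : ℝ, (δ = 1 ∨ δ = -1) ∧ ∃ j ≤ t, p = (0, δ * lam ^ j)) := by
  rcases hp with ⟨i, hi, rfl | rfl⟩ | ⟨j, hj, rfl | rfl⟩
  · exact Or.inl ⟨1, Or.inl rfl, i, hi, by rw [one_mul]⟩
  · exact Or.inl ⟨-1, Or.inr rfl, i, hi, by rw [neg_one_mul]⟩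
  · exact Or.inr ⟨1, Or.inl rfl, j, hj, by rw [one_mul]⟩
  · exact Or.inr ⟨-1, Or.inr rfl, j, hj, by rw [neg_one_mul]⟩

lemma slope_mem (hlam : 0 < lam) {ε δ : ℝ} (hε : ε = 1 ∨ ε = -1) (hδ : δ = 1 ∨ δ = -1)
    {i j : ℕ} (hi : i ≤ s) (hj : j ≤ t) :
    -(δ * lam ^ j) / (ε * lam ^ i) ∈ slopes lam s t := by
  have hne : lam ≠ 0 := ne_of_gt hlam
  have hk : ((j : ℤ) - (i : ℤ)) ∈ Set.Icc (-(s : ℤ)) (t : ℤ) := by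
    constructor <;> omega
  have hval : lam ^ ((j : ℤ) - (i : ℤ)) = lam ^ j / lam ^ i := by
    rw [zpow_sub₀ hne, zpow_natCast, zpow_natCast]
  rcases hε with rfl | rfl <;> rcases hδ with rfl | rfl
  · refine Or.inr (Or.inr ⟨(j : ℤ) - (i : ℤ), hk, ?_⟩)
    simp [hval, neg_div]
  · refine Or.inr (Or.inl ⟨(j : ℤ) - (i : ℤ), hk, ?_⟩)
    simp [hval, neg_div]
  · refine Or.inr (Or.inl ⟨(j : ℤ) - (i : ℤ), hk, ?_⟩)
    simp [hval, neg_div, div_neg]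
  · refine Or.inr (Or.inr ⟨(j : ℤ) - (i : ℤ), hk, ?_⟩)
    simp [hval, neg_div, div_neg]

lemma mem_directions {P : Set (ℝ × ℝ)} {p q : ℝ × ℝ} (hp : p ∈ P) (hq : q ∈ P)
    {x y : ℝ} (e : p - q = (x, y)) (hx : x ≠ 0) : mdir (y / x) ∈ directions P := by
  have h : p - q ≠ 0 := by
    rw [e]
    simp [Prod.ext_iff, hx]
  exact ⟨p, hp, q, hq, h, (mk_sub_eq_mdir h e hx).symm⟩

lemma mem_directions_v {P : Set (ℝ × ℝ)} {p q : ℝ × ℝ} (hp : p ∈ P) (hq : q ∈ P)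
    {y : ℝ} (e : p - q = (0, y)) (hy : y ≠ 0) : vdir ∈ directions P := by
  have h : p - q ≠ 0 := by
    rw [e]
    simp [Prod.ext_iff, hy]
  exact ⟨p, hp, q, hq, h, (mk_sub_eq_vdir h e).symm⟩

lemma pow_div {lam : ℝ} (hne : lam ≠ 0) (i j : ℕ) :
    lam ^ ((j : ℤ) - (i : ℤ)) = lam ^ j / lam ^ i := by
  rw [zpow_sub₀ hne, zpow_natCast, zpow_natCast]

lemma exists_ij {s t : ℕ} (hs : 1 ≤ s) (ht : 1 ≤ t) {k : ℤ}
    (hk : k ∈ Set.Icc (-(s : ℤ)) (t : ℤ)) :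
    ∃ i ≤ s, ∃ j ≤ t, (j : ℤ) - (i : ℤ) = k := by
  obtain ⟨h1, h2⟩ := hk
  rcases le_or_gt 0 k with h | h
  · exact ⟨0, Nat.zero_le _, k.toNat, by omega, by omega⟩
  · exact ⟨(-k).toNat, by omega, 0, Nat.zero_le _, by omega⟩

lemma directions_cross (hlam : 1 < lam) (hs : 1 ≤ s) (ht : 1 ≤ t) :
    directions (cross lam s t) = insert vdir (mdir '' slopes lam s t) := by
  have hpos : 0 < lam := lt_trans one_pos hlam
  have hne : lam ≠ 0 := ne_of_gt hpos
  ext d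
  constructor
  · rintro ⟨p, hp, q, hq, h, rfl⟩
    rcases mem_cross_elim hp with ⟨ε, hε, i, hi, rfl⟩ | ⟨δ, hδ, j, hj, rfl⟩ <;>
      rcases mem_cross_elim hq with ⟨ε', hε', i', hi', rfl⟩ | ⟨δ', hδ', j', hj', rfl⟩
    · -- both on x-axis: horizontal direction, slope 0
      have e : ((ε * lam ^ i, 0) : ℝ × ℝ) - (ε' * lam ^ i', 0)
          = (ε * lam ^ i - ε' * lam ^ i', 0) := by
        simp [Prod.ext_iff]
      have hx : ε * lam ^ i - ε' * lam ^ i' ≠ 0 := by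
        intro hx0
        exact h (by rw [e, hx0]; rfl)
      rw [mk_sub_eq_mdir h e hx]
      refine Set.mem_insert_iff.mpr (Or.inr ⟨0, Or.inl rfl, ?_⟩)
      rw [zero_div]
    · -- p on x-axis, q on y-axis
      have e : ((ε * lam ^ i, 0) : ℝ × ℝ) - (0, δ' * lam ^ j')
          = (ε * lam ^ i, -(δ' * lam ^ j')) := by
        simp [Prod.ext_iff]
      have hx : ε * lam ^ i ≠ 0 := by
        rcases hε with rfl | rfl <;> simp [pow_ne_zero, hne]
      rw [mk_sub_eq_mdir h e hx]
      exact Set.mem_insert_iff.mpr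
        (Or.inr ⟨_, slope_mem hpos hε hδ' hi hj', rfl⟩)
    · -- p on y-axis, q on x-axis
      have e : ((0, δ * lam ^ j) : ℝ × ℝ) - (ε' * lam ^ i', 0)
          = (-(ε' * lam ^ i'), δ * lam ^ j) := by
        simp [Prod.ext_iff]
      have hx : ε' * lam ^ i' ≠ 0 := by
        rcases hε' with rfl | rfl <;> simp [pow_ne_zero, hne]
      rw [mk_sub_eq_mdir h e (neg_ne_zero.mpr hx)]
      have : δ * lam ^ j / -(ε' * lam ^ i') = -(δ * lam ^ j) / (ε' * lam ^ i') := by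
        rw [div_neg, neg_div]
      rw [this]
      exact Set.mem_insert_iff.mpr
        (Or.inr ⟨_, slope_mem hpos hε' hδ hi' hj, rfl⟩)
    · -- both on y-axis: vertical direction
      have e : ((0, δ * lam ^ j) : ℝ × ℝ) - (0, δ' * lam ^ j')
          = (0, δ * lam ^ j - δ' * lam ^ j') := by
        simp [Prod.ext_iff]
      rw [mk_sub_eq_vdir h e]
      exact Set.mem_insert _ _
  · intro hd
    rcases Set.mem_insert_iff.mp hd with rfl | ⟨r, hr, rfl⟩
    · -- vertical direction
      refine mem_directions_v (P := cross lam s t) (p := (0, lam ^ 0))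
        (q := (0, -lam ^ 0)) (Or.inr ⟨0, Nat.zero_le _, Or.inl rfl⟩)
        (Or.inr ⟨0, Nat.zero_le _, Or.inr rfl⟩) (y := 2) ?_ (by norm_num)
      simp [Prod.ext_iff]
      norm_num
    · rcases hr with rfl | ⟨k, hk, rfl⟩ | ⟨k, hk, rfl⟩
      · -- slope 0
        have h2 := mem_directions (P := cross lam s t) (p := (lam ^ 0, 0))
          (q := (-lam ^ 0, 0)) (Or.inl ⟨0, Nat.zero_le _, Or.inl rfl⟩)
          (Or.inl ⟨0, Nat.zero_le _, Or.inr rfl⟩) (x := 2) (y := 0)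
          (by simp [Prod.ext_iff]; norm_num) (by norm_num)
        rwa [zero_div] at h2
      · -- slope lam ^ k
        show mdir (lam ^ k) ∈ directions (cross lam s t)
        obtain ⟨i, hi, j, hj, hij⟩ := exists_ij hs ht hk
        have h2 := mem_directions (P := cross lam s t) (p := (lam ^ i, 0))
          (q := (0, -lam ^ j)) (Or.inl ⟨i, hi, Or.inl rfl⟩)
          (Or.inr ⟨j, hj, Or.inr rfl⟩) (x := lam ^ i) (y := lam ^ j)
          (by simp [Prod.ext_iff]) (pow_ne_zero _ hne)
        rwa [show lam ^ j / lam ^ i = lam ^ k from by rw [← hij, pow_div hne]] at h2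
      · -- slope -lam ^ k
        show mdir (-lam ^ k) ∈ directions (cross lam s t)
        obtain ⟨i, hi, j, hj, hij⟩ := exists_ij hs ht hk
        have h2 := mem_directions (P := cross lam s t) (p := (lam ^ i, 0))
          (q := (0, lam ^ j)) (Or.inl ⟨i, hi, Or.inl rfl⟩)
          (Or.inr ⟨j, hj, Or.inl rfl⟩) (x := lam ^ i) (y := -lam ^ j)
          (by simp [Prod.ext_iff]) (pow_ne_zero _ hne)
        rwa [neg_div, show lam ^ j / lam ^ i = lam ^ k from
          by rw [← hij, pow_div hne]] at h2

end

end Stmt17Aux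

theorem stmt_17 (lam : ℝ) (hlam : 1 < lam) (s t : ℕ) (hs : 1 ≤ s) (ht : 1 ≤ t) :
    (directions
      ({p : ℝ × ℝ | ∃ i ≤ s, p = (lam ^ i, 0) ∨ p = (-lam ^ i, 0)} ∪
        {p : ℝ × ℝ | ∃ j ≤ t, p = (0, lam ^ j) ∨ p = (0, -lam ^ j)})).ncard
      = 2 * (s + t + 2) := by
  have hpos : 0 < lam := lt_trans one_pos hlam
  have hne : lam ≠ 0 := ne_of_gt hpos
  rw [show ({p : ℝ × ℝ | ∃ i ≤ s, p = (lam ^ i, 0) ∨ p = (-lam ^ i, 0)} ∪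
        {p : ℝ × ℝ | ∃ j ≤ t, p = (0, lam ^ j) ∨ p = (0, -lam ^ j)})
      = Stmt17Aux.cross lam s t from rfl,
    Stmt17Aux.directions_cross hlam hs ht]
  have hinj1 : Function.Injective (fun k : ℤ => lam ^ k) :=
    zpow_right_injective₀ hpos (ne_of_gt hlam)
  have hinj2 : Function.Injective (fun k : ℤ => -lam ^ k) :=
    neg_injective.comp hinj1
  have hIeq : Set.Icc (-(s : ℤ)) (t : ℤ) = ↑(Finset.Icc (-(s : ℤ)) (t : ℤ)) :=
    (Finset.coe_Icc _ _).symm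
  have hIfin : (Set.Icc (-(s : ℤ)) (t : ℤ)).Finite := Set.finite_Icc _ _
  have hIcard : (Set.Icc (-(s : ℤ)) (t : ℤ)).ncard = s + t + 1 := by
    rw [hIeq, Set.ncard_coe_finset, Int.card_Icc]
    omega
  have hfin1 : ((fun k : ℤ => lam ^ k) '' Set.Icc (-(s : ℤ)) (t : ℤ)).Finite :=
    hIfin.image _
  have hfin2 : ((fun k : ℤ => -lam ^ k) '' Set.Icc (-(s : ℤ)) (t : ℤ)).Finite :=
    hIfin.image _
  have hdisj : Disjoint ((fun k : ℤ => lam ^ k) '' Set.Icc (-(s : ℤ)) (t : ℤ))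
      ((fun k : ℤ => -lam ^ k) '' Set.Icc (-(s : ℤ)) (t : ℤ)) := by
    rw [Set.disjoint_left]
    rintro a ⟨k, _, rfl⟩ ⟨k', _, hk'⟩
    have h1 : (0 : ℝ) < lam ^ k := zpow_pos hpos _
    have h2 : (0 : ℝ) < lam ^ k' := zpow_pos hpos _
    simp only at hk'
    linarith
  have hunion : (((fun k : ℤ => lam ^ k) '' Set.Icc (-(s : ℤ)) (t : ℤ)) ∪
      ((fun k : ℤ => -lam ^ k) '' Set.Icc (-(s : ℤ)) (t : ℤ))).ncard
      = 2 * (s + t + 1) := by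
    rw [Set.ncard_union_eq hdisj hfin1 hfin2,
      Set.ncard_image_of_injective _ hinj1, Set.ncard_image_of_injective _ hinj2,
      hIcard]
    ring
  have hzero : (0 : ℝ) ∉ (((fun k : ℤ => lam ^ k) '' Set.Icc (-(s : ℤ)) (t : ℤ)) ∪
      ((fun k : ℤ => -lam ^ k) '' Set.Icc (-(s : ℤ)) (t : ℤ))) := by
    rintro (⟨k, _, hk⟩ | ⟨k, _, hk⟩)
    · exact (zpow_pos hpos k).ne' hk
    · simp only at hk
      exact (zpow_pos hpos k).ne (by linarith)
  have hSfin : (Stmt17Aux.slopes lam s t).Finite :=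
    Set.Finite.insert _ (hfin1.union hfin2)
  have hScard : (Stmt17Aux.slopes lam s t).ncard = 2 * (s + t + 1) + 1 := by
    rw [Stmt17Aux.slopes, Set.ncard_insert_of_notMem hzero (hfin1.union hfin2),
      hunion]
  have hv : Stmt17Aux.vdir ∉ Stmt17Aux.mdir '' Stmt17Aux.slopes lam s t := by
    rintro ⟨r, _, hr⟩
    exact Stmt17Aux.mdir_ne_vdir r hr
  rw [Set.ncard_insert_of_notMem hv (hSfin.image _),
    Set.ncard_image_of_injective _ Stmt17Aux.mdir_injective, hScard]
  ring
end

section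
/- A centrally symmetric bipencil consisting of the 2(d+1) points (0, ±λ₁), ..., (0, ±λ_d) with 0 < λ₁ < ⋯ < λ_d on a vertical line together with (±1, 0) determines exactly 2(d+1) directions, and is hence direction-near-critical. -/
noncomputable def fdir (s : ℝ) : Projectivization ℝ (ℝ × ℝ) :=
  Projectivization.mk ℝ (1, s) (fun h => one_ne_zero (congrArg Prod.fst h))

noncomputable def vdir : Projectivization ℝ (ℝ × ℝ) :=
  Projectivization.mk ℝ (0, 1) (fun h => one_ne_zero (congrArg Prod.snd h))

lemma mk_horiz (v : ℝ × ℝ) (hv : v ≠ 0) (hx : v.1 ≠ 0) :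
    Projectivization.mk ℝ v hv = fdir (v.2 / v.1) := by
  rw [fdir, Projectivization.mk_eq_mk_iff]
  refine ⟨Units.mk0 v.1 hx, ?_⟩
  rw [Units.smul_def, Units.val_mk0]
  ext
  · simp
  · simp [mul_div_cancel₀ _ hx]

lemma mk_vert (v : ℝ × ℝ) (hv : v ≠ 0) (hx : v.1 = 0) :
    Projectivization.mk ℝ v hv = vdir := by
  have hy : v.2 ≠ 0 := by
    intro h; exact hv (Prod.ext hx h)
  rw [vdir, Projectivization.mk_eq_mk_iff]
  refine ⟨Units.mk0 v.2 hy, ?_⟩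
  rw [Units.smul_def, Units.val_mk0]
  ext
  · simp [hx]
  · simp

lemma fdir_inj : Function.Injective fdir := by
  intro a b h
  rw [fdir, fdir, Projectivization.mk_eq_mk_iff] at h
  obtain ⟨u, hu⟩ := h
  have h1 := congrArg Prod.fst hu
  have h2 := congrArg Prod.snd hu
  simp [Units.smul_def] at h1 h2
  rw [h1] at h2
  simpa using h2.symm

lemma vdir_ne_fdir (s : ℝ) : vdir ≠ fdir s := by
  intro h
  rw [vdir, fdir, Projectivization.mk_eq_mk_iff] at h
  obtain ⟨u, hu⟩ := h
  have h1 := congrArg Prod.fst hu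
  simp [Units.smul_def] at h1

theorem stmt_18 (d : ℕ) (hd : 1 ≤ d) (lam : ℕ → ℝ)
    (hpos : 0 < lam 1)
    (hmono : ∀ k l, 1 ≤ k → k < l → l ≤ d → lam k < lam l) :
    (directions
      ({p : ℝ × ℝ | ∃ k : ℕ, 1 ≤ k ∧ k ≤ d ∧ (p = (0, lam k) ∨ p = (0, -lam k))} ∪
        {(1,0),(-1,0)})).ncard = 2 * (d + 1) := by
  set P : Set (ℝ × ℝ) :=
    {p : ℝ × ℝ | ∃ k : ℕ, 1 ≤ k ∧ k ≤ d ∧ (p = (0, lam k) ∨ p = (0, -lam k))} ∪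
      {(1,0),(-1,0)} with hPdef
  have hlampos : ∀ k, 1 ≤ k → k ≤ d → 0 < lam k := by
    intro k h1 h2
    rcases eq_or_lt_of_le h1 with h | h
    · rw [← h]; exact hpos
    · exact hpos.trans (hmono 1 k le_rfl h h2)
  set A : Set ℝ := (fun k => lam k) '' Set.Icc 1 d with hAdef
  set B : Set ℝ := (fun k => -lam k) '' Set.Icc 1 d with hBdef
  set S : Set ℝ := insert (0:ℝ) (A ∪ B) with hSdef
  -- classification of points of P
  have hclass : ∀ p ∈ P, (∃ y : ℝ, p = (0, y) ∧ y ≠ 0 ∧ y ∈ S ∧ -y ∈ S) ∨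
      p = ((1:ℝ),0) ∨ p = ((-1:ℝ),0) := by
    rintro p (⟨k, hk1, hk2, hp | hp⟩ | hp)
    · left
      refine ⟨lam k, hp, (hlampos k hk1 hk2).ne', ?_, ?_⟩
      · exact Set.mem_insert_of_mem _ (Or.inl ⟨k, ⟨hk1, hk2⟩, rfl⟩)
      · exact Set.mem_insert_of_mem _ (Or.inr ⟨k, ⟨hk1, hk2⟩, rfl⟩)
    · left
      refine ⟨-lam k, hp, (neg_ne_zero.mpr (hlampos k hk1 hk2).ne'), ?_, ?_⟩
      · exact Set.mem_insert_of_mem _ (Or.inr ⟨k, ⟨hk1, hk2⟩, rfl⟩)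
      · exact Set.mem_insert_of_mem _ (Or.inl ⟨k, ⟨hk1, hk2⟩, by simp⟩)
    · right
      rcases hp with hp | hp
      · exact Or.inl hp
      · exact Or.inr hp
  have hmemS : ∀ s ∈ S, fdir s ∈ insert vdir (fdir '' S) := fun s hs =>
    Set.mem_insert_of_mem _ (Set.mem_image_of_mem _ hs)
  have hset : directions P = insert vdir (fdir '' S) := by
    ext x
    constructor
    · rintro ⟨p, hp, q, hq, hne, rfl⟩
      rcases hclass p hp with ⟨y1, rfl, hy1ne, hy1, hy1'⟩ | rfl | rfl <;>
        rcases hclass q hq with ⟨y2, rfl, hy2ne, hy2, hy2'⟩ | rfl | rfl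
      · rw [mk_vert _ _ (by simp)]
        exact Set.mem_insert _ _
      · rw [mk_horiz _ _ (by norm_num)]
        have : (((0:ℝ), y1) - ((1:ℝ), (0:ℝ))).2 / (((0:ℝ), y1) - ((1:ℝ), (0:ℝ))).1 = -y1 := by
          norm_num [div_neg]
        rw [this]; exact hmemS _ hy1'
      · rw [mk_horiz _ _ (by norm_num)]
        have : (((0:ℝ), y1) - ((-1:ℝ), (0:ℝ))).2 / (((0:ℝ), y1) - ((-1:ℝ), (0:ℝ))).1 = y1 := by
          norm_num [div_neg]
        rw [this]; exact hmemS _ hy1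
      · rw [mk_horiz _ _ (by norm_num)]
        have : (((1:ℝ), (0:ℝ)) - ((0:ℝ), y2)).2 / (((1:ℝ), (0:ℝ)) - ((0:ℝ), y2)).1 = -y2 := by
          norm_num [div_neg]
        rw [this]; exact hmemS _ hy2'
      · exact absurd (by simp) hne
      · rw [mk_horiz _ _ (by norm_num)]
        have : (((1:ℝ), (0:ℝ)) - ((-1:ℝ), (0:ℝ))).2 / (((1:ℝ), (0:ℝ)) - ((-1:ℝ), (0:ℝ))).1 = 0 := by
          norm_num [div_neg]
        rw [this]; exact hmemS _ (Set.mem_insert _ _)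
      · rw [mk_horiz _ _ (by norm_num)]
        have : (((-1:ℝ), (0:ℝ)) - ((0:ℝ), y2)).2 / (((-1:ℝ), (0:ℝ)) - ((0:ℝ), y2)).1 = y2 := by
          norm_num [div_neg]
        rw [this]; exact hmemS _ hy2
      · rw [mk_horiz _ _ (by norm_num)]
        have : (((-1:ℝ), (0:ℝ)) - ((1:ℝ), (0:ℝ))).2 / (((-1:ℝ), (0:ℝ)) - ((1:ℝ), (0:ℝ))).1 = 0 := by
          norm_num [div_neg]
        rw [this]; exact hmemS _ (Set.mem_insert _ _)
      · exact absurd (by simp) hne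
    · have hP1 : ((1:ℝ), (0:ℝ)) ∈ P := Or.inr (Or.inl rfl)
      have hP2 : ((-1:ℝ), (0:ℝ)) ∈ P := Or.inr (Or.inr rfl)
      have hPk : ∀ k, 1 ≤ k → k ≤ d → (((0:ℝ), lam k) ∈ P ∧ ((0:ℝ), -lam k) ∈ P) :=
        fun k h1 h2 => ⟨Or.inl ⟨k, h1, h2, Or.inl rfl⟩, Or.inl ⟨k, h1, h2, Or.inr rfl⟩⟩
      rintro (rfl | ⟨s, hs, rfl⟩)
      · refine ⟨(0, lam 1), (hPk 1 le_rfl hd).1, (0, -lam 1), (hPk 1 le_rfl hd).2, ?_, ?_⟩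
        · intro h
          have := congrArg Prod.snd h
          simp at this
          linarith
        · rw [mk_vert _ _ (by simp)]
      · rcases hs with rfl | ⟨k, hk, rfl⟩ | ⟨k, hk, rfl⟩
        · refine ⟨(1, 0), hP1, (-1, 0), hP2, ?_, ?_⟩
          · intro h
            have := congrArg Prod.fst h
            norm_num at this
          · rw [mk_horiz _ _ (by norm_num)]
            norm_num
        · refine ⟨(0, lam k), (hPk k hk.1 hk.2).1, (-1, 0), hP2, ?_, ?_⟩
          · intro h
            have := congrArg Prod.fst h
            norm_num at this
          · rw [mk_horiz _ _ (by norm_num)]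
            norm_num
        · refine ⟨(0, -lam k), (hPk k hk.1 hk.2).2, (-1, 0), hP2, ?_, ?_⟩
          · intro h
            have := congrArg Prod.fst h
            norm_num at this
          · rw [mk_horiz _ _ (by norm_num)]
            norm_num
  rw [hset]
  have hfinA : A.Finite := (Set.finite_Icc 1 d).image _
  have hfinB : B.Finite := (Set.finite_Icc 1 d).image _
  have hfinS : S.Finite := ((hfinA.union hfinB).insert 0)
  have hvd : vdir ∉ fdir '' S := by
    rintro ⟨s, -, h⟩
    exact vdir_ne_fdir s h.symm
  rw [Set.ncard_insert_of_notMem hvd (hfinS.image fdir),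
    Set.ncard_image_of_injective _ fdir_inj]
  have h0 : (0:ℝ) ∉ A ∪ B := by
    rintro (⟨k, hk, h⟩ | ⟨k, hk, h⟩)
    · exact absurd h.symm (hlampos k hk.1 hk.2).ne
    · have := hlampos k hk.1 hk.2
      simp only at h
      linarith
  rw [hSdef, Set.ncard_insert_of_notMem h0 (hfinA.union hfinB)]
  have hinj : Set.InjOn (fun k => lam k) (Set.Icc 1 d) := by
    intro k hk l hl h
    by_contra hne
    rcases lt_or_gt_of_ne hne with hlt | hlt
    · exact absurd h (hmono k l hk.1 hlt hl.2).ne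
    · exact absurd h.symm (hmono l k hl.1 hlt hk.2).ne
  have hinj' : Set.InjOn (fun k => -lam k) (Set.Icc 1 d) := by
    intro k hk l hl h
    exact hinj hk hl (by simpa using neg_injective h)
  have hIcc : (Set.Icc 1 d).ncard = d := by
    rw [← Finset.coe_Icc, Set.ncard_coe_finset, Nat.card_Icc]
    omega
  have hdisj : Disjoint A B := by
    rw [Set.disjoint_left]
    rintro a ⟨k, hk, rfl⟩ ⟨l, hl, h⟩
    have h1 := hlampos k hk.1 hk.2
    have h2 := hlampos l hl.1 hl.2
    simp only at h
    linarith
  rw [Set.ncard_union_eq hdisj hfinA hfinB, hAdef, hBdef,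
    Set.ncard_image_of_injOn hinj, Set.ncard_image_of_injOn hinj', hIcc]
  omega
end
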